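/- Recursive log-Sobolev estimate: let κ = (κ_1,…,κ_L) with L ≥ 2. Suppose that for each ℓ ∈ [L], τ_ℓ ≥ 0 is a valid log-Sobolev constant for the multislice Ω_{κ^{∖ℓ}} (i.e. Ent(g) ≤ τ_ℓ·𝔈(√g,√g) for all g : Ω_{κ^{∖ℓ}} → [0,∞)), and σ_ℓ ≥ 0 is a valid log-Sobolev constant for the two-color multislice with parameter (κ_ℓ, n−κ_ℓ). Then for every f : Ω_κ → [0,∞), (L−1)·Ent_κ(f) ≤ [ (L−2)·max_{ℓ∈[L]} τ_ℓ + max_{ℓ∈[L]} 2(1−κ_ℓ/n)·σ_ℓ ]·𝔈_κ(√f,√f). -/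

import Mathlib

/-!
For each color `ℓ`, collapse `Ω_κ` onto the two-color slice `Ω_{(κ_ℓ, n - κ_ℓ)}` by recording
where `ℓ` sits. All fibres have the same size, so the entropy splits into the mean entropy of the
fibres plus the entropy of the fibre means. A fibre is a copy of `Ω_{κ∖ℓ}` on the `n - κ_ℓ`
positions not colored `ℓ`, so its entropy is bounded via `τ_ℓ` by the transpositions avoiding `ℓ`;
by Cauchy–Schwarz, the square roots of the fibre means have gradients bounded by those of `√f`
along the transpositions touching `ℓ`, so the second term is bounded via `σ_ℓ`.
Weighting color `ℓ` by `n - κ_ℓ` (these weights sum to `(L - 1) n`) and summing, a transposition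
of two distinct colors is charged `τ_ℓ` by each of the `L - 2` other colors and
`(1 - κ_ℓ / n) σ_ℓ` by each of its own two colors.
-/

open Finset

namespace Multislice

/-- The multislice `Ω_κ`: sequences of length `n` with values in `Fin L`
in which color `ℓ` appears exactly `κ ℓ` times. -/
def slice (L n : ℕ) (κ : Fin L → ℕ) : Finset (Fin n → Fin L) :=
  Finset.univ.filter fun ω => ∀ ℓ, (Finset.univ.filter fun i => ω i = ℓ).card = κ ℓ

/-- Average of `f` with respect to the uniform distribution on `Ω`. -/
noncomputable def expect {L n : ℕ} (Ω : Finset (Fin n → Fin L))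
    (f : (Fin n → Fin L) → ℝ) : ℝ :=
  (∑ ω ∈ Ω, f ω) / Ω.card

/-- Discrete gradient `(∇^{ij} f)(ω) = f(ω^{ij}) - f(ω)`. -/
noncomputable def grad {L n : ℕ} (i j : Fin n) (f : (Fin n → Fin L) → ℝ)
    (ω : Fin n → Fin L) : ℝ :=
  f (ω ∘ Equiv.swap i j) - f ω

/-- The Dirichlet form `𝔈_κ(f,g) = (1/(2n)) Σ_{i<j} E[(∇^{ij}f)(∇^{ij}g)]`. -/
noncomputable def dirichlet {L n : ℕ} (Ω : Finset (Fin n → Fin L))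
    (f g : (Fin n → Fin L) → ℝ) : ℝ :=
  (1 / (2 * (n : ℝ))) *
    ∑ p ∈ Finset.univ.filter (fun p : Fin n × Fin n => p.1 < p.2),
      expect Ω fun ω => grad p.1 p.2 f ω * grad p.1 p.2 g ω

/-- The weighted Dirichlet form `𝔈^G_κ(f,g) = (1/2) Σ_{i<j} G_{ij} E[(∇^{ij}f)(∇^{ij}g)]`. -/
noncomputable def wDirichlet {L n : ℕ} (G : Fin n → Fin n → ℝ)
    (Ω : Finset (Fin n → Fin L)) (f g : (Fin n → Fin L) → ℝ) : ℝ :=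
  (1 / 2) *
    ∑ p ∈ Finset.univ.filter (fun p : Fin n × Fin n => p.1 < p.2),
      G p.1 p.2 * expect Ω fun ω => grad p.1 p.2 f ω * grad p.1 p.2 g ω

/-- Entropy `Ent(f) = E[f log f] - E[f] log E[f]` (note `Real.log 0 = 0`). -/
noncomputable def entropy {L n : ℕ} (Ω : Finset (Fin n → Fin L))
    (f : (Fin n → Fin L) → ℝ) : ℝ :=
  expect Ω (fun ω => f ω * Real.log (f ω)) - expect Ω f * Real.log (expect Ω f)

/-- Variance `Var(f) = E[f²] - (E[f])²`. -/
noncomputable def variance {L n : ℕ} (Ω : Finset (Fin n → Fin L))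
    (f : (Fin n → Fin L) → ℝ) : ℝ :=
  expect Ω (fun ω => f ω ^ 2) - (expect Ω f) ^ 2

/-- The edge boundary `∂A` of `A ⊆ Ω`: edges (recorded as pairs with first endpoint
in `A` and second endpoint in `Ω \ A`) between `A` and its complement, where two
states are adjacent when they differ in exactly two coordinates. -/
def edgeBoundary {L n : ℕ} (Ω A : Finset (Fin n → Fin L)) :
    Finset ((Fin n → Fin L) × (Fin n → Fin L)) :=
  (A ×ˢ (Ω \ A)).filter fun p => (Finset.univ.filter fun i => p.1 i ≠ p.2 i).card = 2

/-- The `ℓ`-colored region `ξ_ℓ(ω) = {i : ω i = ℓ}`. -/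
def xi {L n : ℕ} (ℓ : Fin L) (ω : Fin n → Fin L) : Finset (Fin n) :=
  Finset.univ.filter fun i => ω i = ℓ

/-- The parameter `κ^{∖ℓ}` obtained from `κ` by removing the `ℓ`-th entry. -/
def removeIdx {L : ℕ} (κ : Fin L → ℕ) (ℓ : Fin L) (m : Fin (L - 1)) : ℕ :=
  if (m : ℕ) < (ℓ : ℕ) then κ ⟨m, by have := m.isLt; omega⟩
  else κ ⟨(m : ℕ) + 1, by have := m.isLt; omega⟩

open scoped BigOperators

section Expectation
variable {L n : ℕ}

lemma expect_eq_finsetExpect (Ω : Finset (Fin n → Fin L)) (f : (Fin n → Fin L) → ℝ) :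
    expect Ω f = 𝔼 ω ∈ Ω, f ω :=
  (Finset.expect_eq_sum_div_card Ω f).symm

lemma expect_le_expect {Ω : Finset (Fin n → Fin L)} {f g : (Fin n → Fin L) → ℝ}
    (h : ∀ ω ∈ Ω, f ω ≤ g ω) : expect Ω f ≤ expect Ω g := by
  simpa only [expect_eq_finsetExpect] using Finset.expect_le_expect h

lemma expect_nonneg {Ω : Finset (Fin n → Fin L)} {f : (Fin n → Fin L) → ℝ}
    (h : ∀ ω ∈ Ω, 0 ≤ f ω) : 0 ≤ expect Ω f := by
  simpa only [expect_eq_finsetExpect] using Finset.expect_nonneg h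

lemma expect_congr {Ω : Finset (Fin n → Fin L)} {f g : (Fin n → Fin L) → ℝ}
    (h : ∀ ω ∈ Ω, f ω = g ω) : expect Ω f = expect Ω g := by
  simp only [expect_eq_finsetExpect]
  exact Finset.expect_congr rfl h

lemma expect_image {L' n' : ℕ} {Ω' : Finset (Fin n' → Fin L')}
    {Φ : (Fin n' → Fin L') → Fin n → Fin L} (hΦ : Set.InjOn Φ Ω') (f : (Fin n → Fin L) → ℝ) :
    expect (Ω'.image Φ) f = expect Ω' (f ∘ Φ) := by
  simp only [expect_eq_finsetExpect, Finset.expect_image hΦ, Function.comp_apply]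

lemma entropy_image {L' n' : ℕ} {Ω' : Finset (Fin n' → Fin L')}
    {Φ : (Fin n' → Fin L') → Fin n → Fin L} (hΦ : Set.InjOn Φ Ω') (f : (Fin n → Fin L) → ℝ) :
    entropy (Ω'.image Φ) f = entropy Ω' (f ∘ Φ) := by
  simp only [entropy, expect_image hΦ]
  rfl

/-- In the degenerate cases `M = 0` or `Ω₂ = ∅` both sides vanish, because `x / 0 = 0`. -/
lemma expect_eq_expect_expect_fiber {L₂ n₂ : ℕ} {Ω : Finset (Fin n → Fin L)}
    {Ω₂ : Finset (Fin n₂ → Fin L₂)} {π : (Fin n → Fin L) → Fin n₂ → Fin L₂}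
    (hπ : ∀ ω ∈ Ω, π ω ∈ Ω₂) {M : ℕ} (hM : ∀ x ∈ Ω₂, #{ω ∈ Ω | π ω = x} = M)
    (f : (Fin n → Fin L) → ℝ) :
    expect Ω f = expect Ω₂ (fun x => expect {ω ∈ Ω | π ω = x} f) := by
  have hcard : #Ω = M * #Ω₂ := by
    rw [card_eq_sum_card_fiberwise hπ, sum_congr rfl hM, sum_const, smul_eq_mul, mul_comm]
  have hfib : ∀ x ∈ Ω₂, expect {ω ∈ Ω | π ω = x} f = (∑ ω ∈ Ω with π ω = x, f ω) / M :=
    fun x hx => by rw [expect, hM x hx]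
  rw [expect, expect, sum_congr rfl hfib, ← sum_div, div_div, ← Nat.cast_mul, ← hcard,
    sum_fiberwise_of_maps_to hπ]

lemma entropy_eq_expect_entropy_fiber_add {L₂ n₂ : ℕ} {Ω : Finset (Fin n → Fin L)}
    {Ω₂ : Finset (Fin n₂ → Fin L₂)} {π : (Fin n → Fin L) → Fin n₂ → Fin L₂}
    (hπ : ∀ ω ∈ Ω, π ω ∈ Ω₂) {M : ℕ} (hM : ∀ x ∈ Ω₂, #{ω ∈ Ω | π ω = x} = M)
    (f : (Fin n → Fin L) → ℝ) :
    entropy Ω f = expect Ω₂ (fun x => entropy {ω ∈ Ω | π ω = x} f)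
      + entropy Ω₂ (fun x => expect {ω ∈ Ω | π ω = x} f) := by
  simp only [entropy, expect_eq_expect_expect_fiber hπ hM, expect_eq_finsetExpect Ω₂,
    Finset.expect_sub_distrib]
  ring

/-- Cauchy–Schwarz `E[√u √v] ≤ √(E u) √(E v)`, rearranged. -/
lemma sq_sqrt_expect_sub_le (Ω : Finset (Fin n → Fin L)) {u v : (Fin n → Fin L) → ℝ}
    (hu : ∀ ω, 0 ≤ u ω) (hv : ∀ ω, 0 ≤ v ω) :
    (√(expect Ω u) - √(expect Ω v)) ^ 2 ≤ expect Ω (fun ω => (√(u ω) - √(v ω)) ^ 2) := by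
  have hcs : expect Ω (fun ω => √(u ω) * √(v ω)) ≤ √(expect Ω u) * √(expect Ω v) := by
    have hN : (0 : ℝ) ≤ #Ω := Nat.cast_nonneg _
    have key := Real.sum_sqrt_mul_sqrt_le Ω (f := fun ω => u ω / #Ω) (g := fun ω => v ω / #Ω)
      (fun ω => div_nonneg (hu ω) hN) (fun ω => div_nonneg (hv ω) hN)
    simp only [← sum_div, Real.sqrt_div' _ hN, div_mul_div_comm, Real.mul_self_sqrt hN] at key
    rwa [expect, expect, expect, Real.sqrt_div' _ hN, Real.sqrt_div' _ hN,
      div_mul_div_comm, Real.mul_self_sqrt hN]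
  have hexp : expect Ω (fun ω => (√(u ω) - √(v ω)) ^ 2)
      = expect Ω u + expect Ω v - 2 * expect Ω (fun ω => √(u ω) * √(v ω)) := by
    simp only [expect_eq_finsetExpect, Finset.mul_expect, ← Finset.expect_add_distrib,
      ← Finset.expect_sub_distrib]
    refine Finset.expect_congr rfl fun ω _ => ?_
    rw [sub_sq, Real.sq_sqrt (hu ω), Real.sq_sqrt (hv ω)]
    ring
  rw [hexp, sub_sq, Real.sq_sqrt (expect_nonneg fun ω _ => hu ω),
    Real.sq_sqrt (expect_nonneg fun ω _ => hv ω)]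
  linarith

end Expectation

section Energy
variable {L n : ℕ}

lemma grad_eq_zero_of_apply_eq {i j : Fin n} {ω : Fin n → Fin L} (hij : ω i = ω j)
    (h : (Fin n → Fin L) → ℝ) : grad i j h ω = 0 := by
  rw [grad, Equiv.comp_swap_eq_update, hij, Function.update_eq_self, ← hij,
    Function.update_eq_self, sub_self]

noncomputable def energy (Ω : Finset (Fin n → Fin L)) (W : Fin n → Fin n → (Fin n → Fin L) → ℝ)
    (h : (Fin n → Fin L) → ℝ) : ℝ :=
  (1 / 2) * ∑ p ∈ univ.filter (fun p : Fin n × Fin n => p.1 < p.2),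
    expect Ω fun ω => W p.1 p.2 ω * grad p.1 p.2 h ω ^ 2

variable (Ω : Finset (Fin n → Fin L)) (h : (Fin n → Fin L) → ℝ)

lemma dirichlet_eq_inv_mul_energy : dirichlet Ω h h = (n : ℝ)⁻¹ * energy Ω (fun _ _ _ => 1) h := by
  simp only [dirichlet, energy, one_mul, sq]
  ring

lemma energy_add (W W' : Fin n → Fin n → (Fin n → Fin L) → ℝ) :
    energy Ω (fun i j ω => W i j ω + W' i j ω) h = energy Ω W h + energy Ω W' h := by
  simp only [energy, add_mul, expect_eq_finsetExpect, Finset.expect_add_distrib,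
    sum_add_distrib]
  ring

lemma energy_sum {ι : Type*} (s : Finset ι) (W : ι → Fin n → Fin n → (Fin n → Fin L) → ℝ) :
    energy Ω (fun i j ω => ∑ a ∈ s, W a i j ω) h = ∑ a ∈ s, energy Ω (W a) h := by
  simp only [energy, sum_mul, expect_eq_finsetExpect, Finset.expect_sum_comm, mul_sum]
  exact sum_comm

lemma energy_const_mul (c : ℝ) (W : Fin n → Fin n → (Fin n → Fin L) → ℝ) :
    energy Ω (fun i j ω => c * W i j ω) h = c * energy Ω W h := by
  simp only [energy, mul_assoc, expect_eq_finsetExpect, ← Finset.mul_expect, ← mul_sum]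
  ring

/-- `∇^{ij}` vanishes where `ω i = ω j`, so the rates there are irrelevant. -/
lemma energy_mono {W W' : Fin n → Fin n → (Fin n → Fin L) → ℝ}
    (hW : ∀ ω ∈ Ω, ∀ i j, ω i ≠ ω j → W i j ω ≤ W' i j ω) : energy Ω W h ≤ energy Ω W' h := by
  refine mul_le_mul_of_nonneg_left (sum_le_sum fun p _ => expect_le_expect fun ω hω => ?_)
    (by norm_num)
  by_cases hp : ω p.1 = ω p.2
  · simp [grad_eq_zero_of_apply_eq hp]
  · exact mul_le_mul_of_nonneg_right (hW ω hω p.1 p.2 hp) (sq_nonneg _)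

lemma expect_energy_fiber {L₂ n₂ : ℕ} {Ω₂ : Finset (Fin n₂ → Fin L₂)}
    {π : (Fin n → Fin L) → Fin n₂ → Fin L₂} (hπ : ∀ ω ∈ Ω, π ω ∈ Ω₂) {M : ℕ}
    (hM : ∀ x ∈ Ω₂, #{ω ∈ Ω | π ω = x} = M) (W : Fin n → Fin n → (Fin n → Fin L) → ℝ) :
    expect Ω₂ (fun x => energy {ω ∈ Ω | π ω = x} W h) = energy Ω W h := by
  simp only [energy, expect_eq_expect_expect_fiber hπ hM _, expect_eq_finsetExpect Ω₂,
    ← Finset.mul_expect, ← Finset.expect_sum_comm]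

end Energy

section ColorRate
variable {L n : ℕ}

def colorRate (a b : ℝ) (ℓ : Fin L) (i j : Fin n) (ω : Fin n → Fin L) : ℝ :=
  if ω i = ℓ ∨ ω j = ℓ then a else b

lemma colorRate_add (a b a' b' : ℝ) (ℓ : Fin L) (i j : Fin n) (ω : Fin n → Fin L) :
    colorRate a b ℓ i j ω + colorRate a' b' ℓ i j ω = colorRate (a + a') (b + b') ℓ i j ω := by
  unfold colorRate; split_ifs <;> rfl

lemma mul_colorRate (c a b : ℝ) (ℓ : Fin L) (i j : Fin n) (ω : Fin n → Fin L) :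
    c * colorRate a b ℓ i j ω = colorRate (c * a) (c * b) ℓ i j ω := by
  unfold colorRate; split_ifs <;> rfl

/-- A transposition of two distinct colors touches exactly these two colors. -/
lemma sum_colorRate_le {a b : Fin L → ℝ} {A B : ℝ} (ha : ∀ ℓ, 2 * a ℓ ≤ A) (hb : ∀ ℓ, b ℓ ≤ B)
    {i j : Fin n} {ω : Fin n → Fin L} (hij : ω i ≠ ω j) :
    ∑ ℓ, colorRate (a ℓ) (b ℓ) ℓ i j ω ≤ ((L : ℝ) - 2) * B + A := by
  have htouch : univ.filter (fun ℓ => ω i = ℓ ∨ ω j = ℓ) = {ω i, ω j} := by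
    ext ℓ; simp [eq_comm]
  have hcard : #(univ.filter fun ℓ => ¬(ω i = ℓ ∨ ω j = ℓ)) = L - 2 := by
    rw [filter_not, htouch, card_sdiff_of_subset (subset_univ _), card_univ, Fintype.card_fin,
      card_pair hij]
  have hL : 2 ≤ L := by simpa [card_pair hij] using card_le_univ {ω i, ω j}
  simp only [colorRate, sum_ite, htouch, sum_pair hij]
  have hB := sum_le_card_nsmul (univ.filter fun ℓ => ¬(ω i = ℓ ∨ ω j = ℓ)) b B fun ℓ _ => hb ℓ
  rw [hcard, nsmul_eq_mul, Nat.cast_sub hL] at hB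
  push_cast at hB
  linarith [ha (ω i), ha (ω j)]

end ColorRate

section Fill
variable {L n : ℕ}

/-- The increasing bijection `Fin (L - 1) ≃ {c // c ≠ ℓ}` underlying `removeIdx`. -/
def emb (ℓ : Fin L) (m : Fin (L - 1)) : Fin L :=
  if (m : ℕ) < (ℓ : ℕ) then ⟨m, by have := m.isLt; omega⟩
  else ⟨(m : ℕ) + 1, by have := m.isLt; omega⟩

lemma removeIdx_eq (κ : Fin L → ℕ) (ℓ : Fin L) (m : Fin (L - 1)) :
    removeIdx κ ℓ m = κ (emb ℓ m) := by
  unfold removeIdx emb; split_ifs <;> rfl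

lemma emb_ne (ℓ : Fin L) (m : Fin (L - 1)) : emb ℓ m ≠ ℓ := by
  unfold emb; split_ifs <;> simp [Fin.ext_iff] <;> omega

lemma emb_injective (ℓ : Fin L) : Function.Injective (emb ℓ) := by
  intro a b hab
  unfold emb at hab
  split_ifs at hab <;> simp [Fin.ext_iff] at hab ⊢ <;> omega

lemma exists_emb_eq {ℓ c : Fin L} (hc : c ≠ ℓ) : ∃ m, emb ℓ m = c := by
  have hcℓ : (c : ℕ) ≠ ℓ := Fin.val_ne_of_ne hc
  rcases lt_or_gt_of_ne hcℓ with h | h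
  · exact ⟨⟨c, by omega⟩, by simp [emb, h]⟩
  · exact ⟨⟨c - 1, by omega⟩, by ext; rw [emb, if_neg (by simp; omega)]; simp; omega⟩

variable {m : ℕ} (S : Finset (Fin n)) (hS : #S = m) (ℓ : Fin L)

/-- Identifies `Ω_{κ∖ℓ}` with the states whose `ℓ`-colored positions are exactly those off `S`:
the colors of `ω'`, relabelled by `emb ℓ`, are written along `S` in increasing order. -/
noncomputable def fill (ω' : Fin m → Fin (L - 1)) : Fin n → Fin L :=
  Function.extend (S.orderEmbOfFin hS) (emb ℓ ∘ ω') fun _ => ℓ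

variable {S ℓ}

lemma fill_orderEmbOfFin (ω' : Fin m → Fin (L - 1)) (k : Fin m) :
    fill S hS ℓ ω' (S.orderEmbOfFin hS k) = emb ℓ (ω' k) :=
  (S.orderEmbOfFin hS).injective.extend_apply _ _ k

lemma exists_orderEmbOfFin_eq {i : Fin n} (hi : i ∈ S) : ∃ k, S.orderEmbOfFin hS k = i := by
  rw [← mem_coe, ← S.range_orderEmbOfFin hS] at hi
  exact hi

lemma fill_of_notMem (ω' : Fin m → Fin (L - 1)) {i : Fin n} (hi : i ∉ S) : fill S hS ℓ ω' i = ℓ :=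
  Function.extend_apply' _ _ _ fun ⟨k, hk⟩ => hi (hk ▸ S.orderEmbOfFin_mem hS k)

lemma fill_eq_self_iff (ω' : Fin m → Fin (L - 1)) (i : Fin n) : fill S hS ℓ ω' i = ℓ ↔ i ∉ S := by
  refine ⟨fun h hi => ?_, fill_of_notMem hS ω'⟩
  obtain ⟨k, rfl⟩ := exists_orderEmbOfFin_eq hS hi
  exact emb_ne ℓ _ (by rw [← fill_orderEmbOfFin hS, h])

lemma fill_injective : Function.Injective (fill S hS ℓ) := fun ω₁ ω₂ h =>
  funext fun k => emb_injective ℓ (by rw [← fill_orderEmbOfFin hS, h, fill_orderEmbOfFin])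

lemma fill_comp_swap (ω' : Fin m → Fin (L - 1)) (p q : Fin m) :
    fill S hS ℓ (ω' ∘ Equiv.swap p q)
      = fill S hS ℓ ω' ∘ Equiv.swap (S.orderEmbOfFin hS p) (S.orderEmbOfFin hS q) := by
  funext i
  by_cases hi : i ∈ S
  · obtain ⟨k, rfl⟩ := exists_orderEmbOfFin_eq hS hi
    rw [Function.comp_apply, (S.orderEmbOfFin hS).injective.swap_apply, fill_orderEmbOfFin,
      fill_orderEmbOfFin, Function.comp_apply]
  · have hp := S.orderEmbOfFin_mem hS p
    have hq := S.orderEmbOfFin_mem hS q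
    rw [Function.comp_apply, Equiv.swap_apply_of_ne_of_ne (by rintro rfl; exact hi hp)
      (by rintro rfl; exact hi hq), fill_of_notMem hS _ hi, fill_of_notMem hS _ hi]

lemma card_fill_eq_emb (ω' : Fin m → Fin (L - 1)) (k : Fin (L - 1)) :
    #{i | fill S hS ℓ ω' i = emb ℓ k} = #{j | ω' j = k} := by
  symm
  refine card_nbij (S.orderEmbOfFin hS) (fun j hj => ?_)
    (fun _ _ _ _ h => (S.orderEmbOfFin hS).injective h) (fun i hi => ?_)
  · simp_all [fill_orderEmbOfFin]
  · simp only [coe_filter, mem_univ, true_and, Set.mem_ofPred] at hi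
    have hiS : i ∈ S := by
      by_contra hiS
      exact emb_ne ℓ k (by rw [← hi, fill_of_notMem hS _ hiS])
    obtain ⟨j, rfl⟩ := exists_orderEmbOfFin_eq hS hiS
    rw [fill_orderEmbOfFin] at hi
    exact ⟨j, by simpa using emb_injective ℓ hi, rfl⟩

end Fill

section Fiber
variable {L n : ℕ} {κ : Fin L → ℕ} {ℓ : Fin L}

lemma mem_slice {Λ : ℕ} {κ' : Fin Λ → ℕ} {ω : Fin n → Fin Λ} :
    ω ∈ slice Λ n κ' ↔ ∀ c, #{i | ω i = c} = κ' c := by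
  simp [slice]

lemma comp_perm_mem_slice_iff (σ : Equiv.Perm (Fin n)) {ω : Fin n → Fin L} :
    ω ∘ σ ∈ slice L n κ ↔ ω ∈ slice L n κ := by
  simp only [mem_slice]
  refine forall_congr' fun c => Eq.congr_left (card_equiv σ fun i => ?_)
  simp

lemma fill_mem_slice_iff {m : ℕ} {S : Finset (Fin n)} (hS : #S = m) (hSc : #Sᶜ = κ ℓ)
    {ω' : Fin m → Fin (L - 1)} :
    fill S hS ℓ ω' ∈ slice L n κ ↔ ω' ∈ slice (L - 1) m (removeIdx κ ℓ) := by
  simp only [mem_slice, removeIdx_eq]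
  refine ⟨fun h k => by rw [← card_fill_eq_emb hS, h], fun h c => ?_⟩
  by_cases hc : c = ℓ
  · subst hc
    rw [← hSc]
    congr 1
    ext i
    simp [fill_eq_self_iff]
  · obtain ⟨k, rfl⟩ := exists_emb_eq hc
    rw [card_fill_eq_emb, h]

def collapse (ℓ : Fin L) (ω : Fin n → Fin L) : Fin n → Fin 2 :=
  fun i => if ω i = ℓ then 0 else 1

lemma collapse_eq_iff {ω : Fin n → Fin L} {x : Fin n → Fin 2} :
    collapse ℓ ω = x ↔ ∀ i, ω i = ℓ ↔ x i ≠ 1 := by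
  simp only [funext_iff, collapse]
  refine forall_congr' fun i => ?_
  by_cases h : ω i = ℓ <;> simp [h, Fin.ext_iff] <;> omega

lemma collapse_mem_slice {ω : Fin n → Fin L} (hω : ω ∈ slice L n κ) :
    collapse ℓ ω ∈ slice 2 n ![κ ℓ, n - κ ℓ] := by
  rw [mem_slice] at hω ⊢
  have h0 : ∀ i, collapse ℓ ω i = 0 ↔ ω i = ℓ := fun i => by
    by_cases h : ω i = ℓ <;> simp [collapse, h]
  have h1 : ∀ i, collapse ℓ ω i = 1 ↔ ¬ω i = ℓ := fun i => by
    by_cases h : ω i = ℓ <;> simp [collapse, h]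
  intro c
  fin_cases c
  · simp [h0, hω ℓ]
  · simp [h1, filter_not, card_sdiff_of_subset, hω ℓ]

variable {x : Fin n → Fin 2}

lemma card_filter_eq_one (hx : x ∈ slice 2 n ![κ ℓ, n - κ ℓ]) : #{i | x i = 1} = n - κ ℓ := by
  simpa using mem_slice.1 hx 1

lemma card_compl_filter_eq_one (hx : x ∈ slice 2 n ![κ ℓ, n - κ ℓ]) :
    #({i | x i = 1} : Finset (Fin n))ᶜ = κ ℓ := by
  have h0 : #{i | x i = 0} = κ ℓ := mem_slice.1 hx 0
  rw [compl_filter, ← h0]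
  congr 1
  ext i
  simp only [mem_filter, mem_univ, true_and]
  generalize x i = a
  fin_cases a <;> simp

lemma fiber_eq_image (hx : x ∈ slice 2 n ![κ ℓ, n - κ ℓ]) :
    {ω ∈ slice L n κ | collapse ℓ ω = x}
      = (slice (L - 1) (n - κ ℓ) (removeIdx κ ℓ)).image (fill _ (card_filter_eq_one hx) ℓ) := by
  set S : Finset (Fin n) := {i | x i = 1}
  have hS := card_filter_eq_one hx
  have hSc := card_compl_filter_eq_one hx
  ext ω
  simp only [mem_filter, mem_image]
  constructor
  · rintro ⟨hω, hcol⟩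
    have hℓ : ∀ i, ω i = ℓ ↔ i ∉ S := by simpa [S] using collapse_eq_iff.1 hcol
    choose ω' hω' using fun k => exists_emb_eq
      ((hℓ (S.orderEmbOfFin hS k)).not.2 (not_not.2 (S.orderEmbOfFin_mem hS k)))
    have hω'ω : fill S hS ℓ ω' = ω := funext fun i => by
      by_cases hi : i ∈ S
      · obtain ⟨k, rfl⟩ := exists_orderEmbOfFin_eq hS hi
        rw [fill_orderEmbOfFin, hω']
      · rw [fill_of_notMem hS _ hi, (hℓ i).2 hi]
    exact ⟨ω', (fill_mem_slice_iff hS hSc).1 (hω'ω ▸ hω), hω'ω⟩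
  · rintro ⟨ω', hω', rfl⟩
    refine ⟨(fill_mem_slice_iff hS hSc).2 hω', collapse_eq_iff.2 fun i => ?_⟩
    simpa [S] using fill_eq_self_iff hS ω' i

lemma card_fiber (hx : x ∈ slice 2 n ![κ ℓ, n - κ ℓ]) :
    #{ω ∈ slice L n κ | collapse ℓ ω = x} = #(slice (L - 1) (n - κ ℓ) (removeIdx κ ℓ)) := by
  rw [fiber_eq_image hx, card_image_of_injective _ (fill_injective _)]

lemma comp_swap_mem_fiber_iff (i j : Fin n) {ω : Fin n → Fin L} :
    ω ∘ Equiv.swap i j ∈ {ω ∈ slice L n κ | collapse ℓ ω = x ∘ Equiv.swap i j}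
      ↔ ω ∈ {ω ∈ slice L n κ | collapse ℓ ω = x} := by
  rw [mem_filter, mem_filter, comp_perm_mem_slice_iff,
    show collapse ℓ (ω ∘ Equiv.swap i j) = collapse ℓ ω ∘ Equiv.swap i j from rfl,
    (Equiv.swap i j).surjective.injective_comp_right.eq_iff]

lemma expect_fiber_comp_swap (i j : Fin n) (g : (Fin n → Fin L) → ℝ) :
    expect {ω ∈ slice L n κ | collapse ℓ ω = x ∘ Equiv.swap i j} g
      = expect {ω ∈ slice L n κ | collapse ℓ ω = x} (fun ω => g (ω ∘ Equiv.swap i j)) := by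
  have hinv : ∀ ω : Fin n → Fin L, ω ∘ Equiv.swap i j ∘ Equiv.swap i j = ω := fun ω => by
    ext; simp
  simp only [expect_eq_finsetExpect]
  refine (Finset.expect_nbij' (· ∘ Equiv.swap i j) (· ∘ Equiv.swap i j)
    (fun ω hω => (comp_swap_mem_fiber_iff i j).2 hω) (fun ω hω => ?_)
    (fun ω _ => hinv ω) (fun ω _ => hinv ω) fun _ _ => rfl).symm
  rwa [← comp_swap_mem_fiber_iff i j, Function.comp_assoc, hinv]

end Fiber

section PerColor
variable {L n : ℕ} {κ : Fin L → ℕ} {ℓ : Fin L} {f : (Fin n → Fin L) → ℝ}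

/-- Swapping `i, j` moves the fibre over `x` onto the fibre over `x ∘ swap i j`; when this changes
`x`, every state of the fibre has exactly one of `i, j` colored `ℓ`. -/
lemma sq_grad_sqrt_expect_fiber_le (hf : ∀ ω, 0 ≤ f ω) (i j : Fin n) (x : Fin n → Fin 2) :
    grad i j (fun y => √(expect {ω ∈ slice L n κ | collapse ℓ ω = y} f)) x ^ 2
      ≤ expect {ω ∈ slice L n κ | collapse ℓ ω = x}
          (fun ω => colorRate 1 0 ℓ i j ω * grad i j (fun ω => √(f ω)) ω ^ 2) := by
  by_cases hx : x i = x j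
  · rw [grad_eq_zero_of_apply_eq hx, sq, mul_zero]
    exact expect_nonneg fun ω _ => mul_nonneg (by unfold colorRate; split_ifs <;> norm_num)
      (sq_nonneg _)
  have hrate : ∀ ω ∈ {ω ∈ slice L n κ | collapse ℓ ω = x}, colorRate 1 0 ℓ i j ω = 1 := by
    intro ω hω
    have hcol := collapse_eq_iff.1 (mem_filter.1 hω).2
    refine if_pos (by_contra fun h => hx ?_)
    rw [not_or] at h
    rw [not_not.1 ((hcol i).not.1 h.1), not_not.1 ((hcol j).not.1 h.2)]
  rw [grad, expect_fiber_comp_swap]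
  refine (sq_sqrt_expect_sub_le _ (fun ω => hf _) hf).trans_eq (expect_congr fun ω hω => ?_)
  rw [hrate ω hω, one_mul]
  rfl

lemma dirichlet_sqrt_expect_fiber_le (hf : ∀ ω, 0 ≤ f ω) :
    dirichlet (slice 2 n ![κ ℓ, n - κ ℓ])
        (fun x => √(expect {ω ∈ slice L n κ | collapse ℓ ω = x} f))
        (fun x => √(expect {ω ∈ slice L n κ | collapse ℓ ω = x} f))
      ≤ (n : ℝ)⁻¹ * energy (slice L n κ) (colorRate 1 0 ℓ) (fun ω => √(f ω)) := by
  rw [dirichlet_eq_inv_mul_energy]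
  refine mul_le_mul_of_nonneg_left (mul_le_mul_of_nonneg_left (sum_le_sum fun p _ => ?_)
    (by norm_num)) (by positivity)
  refine (expect_le_expect fun x _ => ?_).trans_eq
    (expect_eq_expect_expect_fiber (fun ω => collapse_mem_slice) (fun x => card_fiber) _).symm
  exact (one_mul _).trans_le (sq_grad_sqrt_expect_fiber_le hf _ _ x)

lemma entropy_expect_fiber_le {σ : ℝ} (hσ0 : 0 ≤ σ)
    (hσ : ∀ g : (Fin n → Fin 2) → ℝ, (∀ ω, 0 ≤ g ω) →
      entropy (slice 2 n ![κ ℓ, n - κ ℓ]) g ≤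
        σ * dirichlet (slice 2 n ![κ ℓ, n - κ ℓ])
          (fun ω => Real.sqrt (g ω)) (fun ω => Real.sqrt (g ω)))
    (hf : ∀ ω, 0 ≤ f ω) :
    entropy (slice 2 n ![κ ℓ, n - κ ℓ]) (fun x => expect {ω ∈ slice L n κ | collapse ℓ ω = x} f)
      ≤ energy (slice L n κ) (colorRate (σ * (n : ℝ)⁻¹) 0 ℓ) (fun ω => √(f ω)) := by
  calc _ ≤ σ * ((n : ℝ)⁻¹ * energy (slice L n κ) (colorRate 1 0 ℓ) (fun ω => √(f ω))) :=
        (hσ _ fun x => expect_nonneg fun ω _ => hf ω).trans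
          (mul_le_mul_of_nonneg_left (dirichlet_sqrt_expect_fiber_le hf) hσ0)
    _ = _ := by
      rw [← mul_assoc, ← energy_const_mul]
      simp only [mul_colorRate, mul_one, mul_zero]

lemma sum_pairs_orderEmbOfFin {m : ℕ} (S : Finset (Fin n)) (hS : #S = m) (G : Fin n → Fin n → ℝ) :
    ∑ p ∈ univ.filter (fun p : Fin m × Fin m => p.1 < p.2),
        G (S.orderEmbOfFin hS p.1) (S.orderEmbOfFin hS p.2)
      = ∑ p ∈ univ.filter (fun p : Fin n × Fin n => p.1 < p.2),
          if p.1 ∈ S ∧ p.2 ∈ S then G p.1 p.2 else 0 := by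
  rw [← sum_filter, filter_filter]
  refine sum_nbij (fun p => (S.orderEmbOfFin hS p.1, S.orderEmbOfFin hS p.2)) (fun p hp => ?_)
    (fun p _ q _ h => ?_) (fun q hq => ?_) fun _ _ => rfl
  · simp_all
  · simp only [Prod.mk.injEq, EmbeddingLike.apply_eq_iff_eq] at h
    exact Prod.ext h.1 h.2
  · obtain ⟨q1, q2⟩ := q
    simp only [coe_filter, mem_univ, true_and] at hq
    obtain ⟨hlt, h1, h2⟩ := hq
    obtain ⟨a, rfl⟩ := exists_orderEmbOfFin_eq hS h1
    obtain ⟨b, rfl⟩ := exists_orderEmbOfFin_eq hS h2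
    exact ⟨(a, b), by simpa using hlt, rfl⟩

lemma mem_image_fill_iff {m : ℕ} {S : Finset (Fin n)} (hS : #S = m)
    {Ω' : Finset (Fin m → Fin (L - 1))} {ω : Fin n → Fin L} (hω : ω ∈ Ω'.image (fill S hS ℓ))
    (i : Fin n) : ω i = ℓ ↔ i ∉ S := by
  obtain ⟨ω', -, rfl⟩ := mem_image.1 hω
  exact fill_eq_self_iff hS ω' i

/-- Transpositions of `Fin m` act on the filled states as the transpositions inside `S`. -/
lemma dirichlet_comp_fill {m : ℕ} (S : Finset (Fin n)) (hS : #S = m)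
    (Ω' : Finset (Fin m → Fin (L - 1))) (h : (Fin n → Fin L) → ℝ) :
    dirichlet Ω' (fun ω' => h (fill S hS ℓ ω')) (fun ω' => h (fill S hS ℓ ω'))
      = (m : ℝ)⁻¹ * energy (Ω'.image (fill S hS ℓ)) (colorRate 0 1 ℓ) h := by
  have hgrad : ∀ p q ω', grad p q (fun ω' => h (fill S hS ℓ ω')) ω'
      = grad (S.orderEmbOfFin hS p) (S.orderEmbOfFin hS q) h (fill S hS ℓ ω') := by
    intro p q ω'
    simp only [grad, fill_comp_swap]
  have himage : ∀ i j, expect Ω' (fun ω' => grad i j h (fill S hS ℓ ω') ^ 2)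
      = expect (Ω'.image (fill S hS ℓ)) (fun ω => grad i j h ω ^ 2) :=
    fun i j => (expect_image (fill_injective hS).injOn (fun ω => grad i j h ω ^ 2)).symm
  rw [dirichlet_eq_inv_mul_energy]
  simp only [energy, one_mul, hgrad, himage]
  rw [sum_pairs_orderEmbOfFin S hS
    (fun i j => expect (Ω'.image (fill S hS ℓ)) fun ω => grad i j h ω ^ 2)]
  congr 2
  refine sum_congr rfl fun p _ => ?_
  split_ifs with hp
  · refine expect_congr fun ω hω => ?_
    rw [colorRate, if_neg, one_mul]
    simp [mem_image_fill_iff hS hω, hp.1, hp.2]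
  · rw [expect_eq_finsetExpect]
    refine (Finset.expect_eq_zero fun ω hω => ?_).symm
    rw [colorRate, if_pos, zero_mul]
    simpa [mem_image_fill_iff hS hω, ← not_and_or] using hp

lemma entropy_fiber_le {τ : ℝ}
    (hτ : ∀ g : (Fin (n - κ ℓ) → Fin (L - 1)) → ℝ, (∀ ω, 0 ≤ g ω) →
      entropy (slice (L - 1) (n - κ ℓ) (removeIdx κ ℓ)) g ≤
        τ * dirichlet (slice (L - 1) (n - κ ℓ) (removeIdx κ ℓ))
          (fun ω => Real.sqrt (g ω)) (fun ω => Real.sqrt (g ω)))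
    (hf : ∀ ω, 0 ≤ f ω) {x : Fin n → Fin 2} (hx : x ∈ slice 2 n ![κ ℓ, n - κ ℓ]) :
    entropy {ω ∈ slice L n κ | collapse ℓ ω = x} f
      ≤ energy {ω ∈ slice L n κ | collapse ℓ ω = x}
          (colorRate 0 (τ * ((n - κ ℓ : ℕ) : ℝ)⁻¹) ℓ) (fun ω => √(f ω)) := by
  rw [fiber_eq_image hx, entropy_image (fill_injective _).injOn]
  refine (hτ _ fun ω' => hf _).trans_eq ?_
  rw [dirichlet_comp_fill _ (card_filter_eq_one hx) _ fun ω => √(f ω),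
    ← mul_assoc, ← energy_const_mul]
  simp only [mul_colorRate, mul_zero, mul_one]

lemma mul_entropy_le_energy {τ σ : ℝ} (hκℓ : κ ℓ < n) (hσ0 : 0 ≤ σ)
    (hτ : ∀ g : (Fin (n - κ ℓ) → Fin (L - 1)) → ℝ, (∀ ω, 0 ≤ g ω) →
      entropy (slice (L - 1) (n - κ ℓ) (removeIdx κ ℓ)) g ≤
        τ * dirichlet (slice (L - 1) (n - κ ℓ) (removeIdx κ ℓ))
          (fun ω => Real.sqrt (g ω)) (fun ω => Real.sqrt (g ω)))
    (hσ : ∀ g : (Fin n → Fin 2) → ℝ, (∀ ω, 0 ≤ g ω) →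
      entropy (slice 2 n ![κ ℓ, n - κ ℓ]) g ≤
        σ * dirichlet (slice 2 n ![κ ℓ, n - κ ℓ])
          (fun ω => Real.sqrt (g ω)) (fun ω => Real.sqrt (g ω)))
    (hf : ∀ ω, 0 ≤ f ω) :
    ((n - κ ℓ : ℕ) : ℝ) * entropy (slice L n κ) f
      ≤ energy (slice L n κ) (colorRate ((1 - κ ℓ / n) * σ) τ ℓ) (fun ω => √(f ω)) := by
  have hπ : ∀ ω ∈ slice L n κ, collapse ℓ ω ∈ slice 2 n ![κ ℓ, n - κ ℓ] :=
    fun ω => collapse_mem_slice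
  have hm : ((n - κ ℓ : ℕ) : ℝ) ≠ 0 := by exact_mod_cast (Nat.sub_pos_of_lt hκℓ).ne'
  rw [entropy_eq_expect_entropy_fiber_add hπ (fun x => card_fiber)]
  calc _ ≤ ((n - κ ℓ : ℕ) : ℝ) *
        (energy (slice L n κ) (colorRate 0 (τ * ((n - κ ℓ : ℕ) : ℝ)⁻¹) ℓ) (fun ω => √(f ω))
          + energy (slice L n κ) (colorRate (σ * (n : ℝ)⁻¹) 0 ℓ) (fun ω => √(f ω))) := by
        gcongr
        · rw [← expect_energy_fiber _ _ hπ fun x => card_fiber]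
          exact expect_le_expect fun x hx => entropy_fiber_le hτ hf hx
        · exact entropy_expect_fiber_le hσ0 hσ hf
    _ = _ := by
      rw [← energy_add, ← energy_const_mul]
      simp only [colorRate_add, mul_colorRate, zero_add, add_zero]
      have hn : (n : ℝ) ≠ 0 := by exact_mod_cast (Nat.zero_le _).trans_lt hκℓ |>.ne'
      rw [mul_left_comm _ τ, mul_inv_cancel₀ hm, mul_one, Nat.cast_sub hκℓ.le]
      field_simp

end PerColor

lemma lt_sum_of_pos {L : ℕ} (hL : 2 ≤ L) {κ : Fin L → ℕ} (hκ : ∀ ℓ, 0 < κ ℓ) (ℓ : Fin L) :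
    κ ℓ < ∑ ℓ, κ ℓ := by
  have : Nontrivial (Fin L) := Fin.nontrivial_iff_two_le.2 hL
  obtain ⟨j, hj⟩ := exists_ne ℓ
  exact single_lt_sum hj (mem_univ _) (mem_univ _) (hκ j) fun _ _ _ => Nat.zero_le _

lemma sum_cast_sub_eq {L n : ℕ} {κ : Fin L → ℕ} (hn : n = ∑ ℓ, κ ℓ) :
    ∑ ℓ, ((n - κ ℓ : ℕ) : ℝ) = ((L : ℝ) - 1) * n := by
  have hκn : ∀ ℓ, κ ℓ ≤ n := fun ℓ => hn ▸ single_le_sum (fun _ _ => Nat.zero_le _) (mem_univ ℓ)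
  simp only [Nat.cast_sub (hκn _), sum_sub_distrib, sum_const, card_univ, Fintype.card_fin,
    nsmul_eq_mul, ← Nat.cast_sum, ← hn]
  ring

/-- recursive log-Sobolev estimate (Proposition: recursion over colors). -/
theorem multislice_recursive_logSobolev
    (L : ℕ) (hL : 2 ≤ L) (κ : Fin L → ℕ) (hκ : ∀ ℓ, 0 < κ ℓ)
    (n : ℕ) (hn : n = ∑ ℓ, κ ℓ)
    (τ σ : Fin L → ℝ) (hσ0 : ∀ ℓ, 0 ≤ σ ℓ)
    (hτ : ∀ ℓ, ∀ g : (Fin (n - κ ℓ) → Fin (L - 1)) → ℝ, (∀ ω, 0 ≤ g ω) →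
      entropy (slice (L - 1) (n - κ ℓ) (removeIdx κ ℓ)) g ≤
        τ ℓ * dirichlet (slice (L - 1) (n - κ ℓ) (removeIdx κ ℓ))
          (fun ω => Real.sqrt (g ω)) (fun ω => Real.sqrt (g ω)))
    (hσ : ∀ ℓ, ∀ g : (Fin n → Fin 2) → ℝ, (∀ ω, 0 ≤ g ω) →
      entropy (slice 2 n ![κ ℓ, n - κ ℓ]) g ≤
        σ ℓ * dirichlet (slice 2 n ![κ ℓ, n - κ ℓ])
          (fun ω => Real.sqrt (g ω)) (fun ω => Real.sqrt (g ω)))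
    (f : (Fin n → Fin L) → ℝ) (hf : ∀ ω, 0 ≤ f ω) :
    ((L : ℝ) - 1) * entropy (slice L n κ) f ≤
      (((L : ℝ) - 2) * (Finset.univ.sup' ⟨⟨0, by omega⟩, Finset.mem_univ _⟩ τ) +
        Finset.univ.sup' ⟨⟨0, by omega⟩, Finset.mem_univ _⟩
          (fun ℓ => 2 * (1 - (κ ℓ : ℝ) / (n : ℝ)) * σ ℓ)) *
        dirichlet (slice L n κ) (fun ω => Real.sqrt (f ω)) (fun ω => Real.sqrt (f ω)) := by
  have hκn : ∀ ℓ, κ ℓ < n := fun ℓ => hn ▸ lt_sum_of_pos hL hκ ℓ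
  have hn0 : (0 : ℝ) < n := Nat.cast_pos.2 ((Nat.zero_le _).trans_lt (hκn ⟨0, by omega⟩))
  set C := ((L : ℝ) - 2) * univ.sup' ⟨⟨0, by omega⟩, mem_univ _⟩ τ
    + univ.sup' ⟨⟨0, by omega⟩, mem_univ _⟩ (fun ℓ => 2 * (1 - (κ ℓ : ℝ) / (n : ℝ)) * σ ℓ)
  refine le_of_mul_le_mul_right ?_ hn0
  calc ((L : ℝ) - 1) * entropy (slice L n κ) f * n
      = ∑ ℓ, ((n - κ ℓ : ℕ) : ℝ) * entropy (slice L n κ) f := by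
        rw [← sum_mul, sum_cast_sub_eq hn]; ring
    _ ≤ ∑ ℓ, energy (slice L n κ) (colorRate ((1 - κ ℓ / n) * σ ℓ) (τ ℓ) ℓ) (fun ω => √(f ω)) :=
        sum_le_sum fun ℓ _ => mul_entropy_le_energy (hκn ℓ) (hσ0 ℓ) (hτ ℓ) (hσ ℓ) hf
    _ = energy (slice L n κ) (fun i j ω => ∑ ℓ, colorRate ((1 - κ ℓ / n) * σ ℓ) (τ ℓ) ℓ i j ω)
          (fun ω => √(f ω)) := (energy_sum _ _ _ _).symm
    _ ≤ energy (slice L n κ) (fun _ _ _ => C * 1) (fun ω => √(f ω)) :=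
        energy_mono _ _ fun ω _ i j hij => (mul_one C).symm ▸ sum_colorRate_le
          (fun ℓ => (mul_assoc _ _ _).symm.trans_le
            (le_sup' (fun ℓ => 2 * (1 - (κ ℓ : ℝ) / (n : ℝ)) * σ ℓ) (mem_univ ℓ)))
          (fun ℓ => le_sup' τ (mem_univ ℓ)) hij
    _ = C * dirichlet (slice L n κ) (fun ω => √(f ω)) (fun ω => √(f ω)) * n := by
        rw [energy_const_mul, dirichlet_eq_inv_mul_energy]
        field_simp

end Multislice
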